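/- arXiv:1108.5276 — 3 statements merged into one kernel-verified Lean document; each statement's English description precedes it below -/
import Mathlib

section
/- Let n, k, r, m be positive integers with n ≥ 3, n > k, n ≥ 2k - 3, m ≥ 2, r ≤ n/2 (as rationals), and suppose r = τ·m where τ is a rational with n - k < τ < n - k + 1. Then a contradiction follows; i.e., no such integers exist. -/
theorem stmt_4 (n k r m : ℤ) (hn0 : 0 < n) (hk0 : 0 < k) (hr0 : 0 < r) (hm0 : 0 < m)
    (hn : 3 ≤ n) (hnk : k < n) (htech : 2 * k - 3 ≤ n) (hm2 : 2 ≤ m)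
    (hr : (r : ℚ) ≤ (n : ℚ) / 2) (τ : ℚ) (hrτ : (r : ℚ) = τ * m)
    (h1 : (n : ℚ) - k < τ) (h2 : τ < (n : ℚ) - k + 1) :
    False := by
  have hkn : (k : ℚ) < n := by exact_mod_cast hnk
  have hτpos : 0 < τ := by linarith
  have hm2' : (2 : ℚ) ≤ (m : ℚ) := by exact_mod_cast hm2
  have h3 : (r : ℚ) ≥ 2 * τ := by rw [hrτ]; nlinarith
  have h4 : (2 : ℚ) * ((n : ℚ) - k) < r := by linarith
  have h5 : 2 * (n - k) < r := by exact_mod_cast (by push_cast; linarith : ((2 * (n - k) : ℤ) : ℚ) < (r : ℚ))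
  have h6 : 2 * r ≤ n := by exact_mod_cast (by push_cast at hr ⊢; linarith : ((2 * r : ℤ) : ℚ) ≤ (n : ℚ))
  omega
end

section
/- Let n, k, m be positive integers with k ≥ 2, and suppose τ = (n+1)/m is a rational number with n - k < τ < n - k + 1 and n > k. Then n ≤ 2k, and the complete list of solutions (n, k, m) is: (2k, k, 2) for any k ≥ 2; (3,2,3); (4,3,3); (4,3,4); (6,4,3); (5,4,4); (5,4,5); (7,5,3); (9,6,3); and all (n,k,m) with k+1 ≤ n ≤ 2k-4. -/
theorem stmt_5 (n k m : ℤ) (hn0 : 0 < n) (hk0 : 0 < k) (hm0 : 0 < m)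
    (hk : 2 ≤ k) (τ : ℚ) (hτ : τ = ((n : ℚ) + 1) / m)
    (h1 : (n : ℚ) - k < τ) (h2 : τ < (n : ℚ) - k + 1) (hnk : k < n) :
    n ≤ 2 * k ∧
      ((n = 2 * k ∧ m = 2) ∨
       (n = 3 ∧ k = 2 ∧ m = 3) ∨
       (n = 4 ∧ k = 3 ∧ m = 3) ∨
       (n = 4 ∧ k = 3 ∧ m = 4) ∨
       (n = 6 ∧ k = 4 ∧ m = 3) ∨
       (n = 5 ∧ k = 4 ∧ m = 4) ∨
       (n = 5 ∧ k = 4 ∧ m = 5) ∨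
       (n = 7 ∧ k = 5 ∧ m = 3) ∨
       (n = 9 ∧ k = 6 ∧ m = 3) ∨
       (k + 1 ≤ n ∧ n ≤ 2 * k - 4)) := by
  have hmQ : (0:ℚ) < (m:ℚ) := by exact_mod_cast hm0
  rw [hτ, lt_div_iff₀ hmQ] at h1
  rw [hτ, div_lt_iff₀ hmQ] at h2
  have H1 : (n - k) * m < n + 1 := by exact_mod_cast h1
  have H2 : n + 1 < (n - k + 1) * m := by exact_mod_cast h2
  -- m ≥ 2
  have hm2 : 2 ≤ m := by
    by_contra h
    have hm1 : m = 1 := by omega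
    rw [hm1] at H2
    linarith
  -- n ≤ 2k
  have hd0 : (0:ℤ) ≤ n - k := by omega
  have key : 2 * (n - k) ≤ (n - k) * m := by
    nlinarith [mul_le_mul_of_nonneg_left hm2 hd0]
  have h2k : n ≤ 2 * k := by nlinarith
  refine ⟨h2k, ?_⟩
  rcases le_or_gt n (2 * k - 4) with hle | hgt
  · exact Or.inr (Or.inr (Or.inr (Or.inr (Or.inr (Or.inr (Or.inr (Or.inr (Or.inr
      ⟨by omega, hle⟩))))))))
  · have hcases : n = 2 * k - 3 ∨ n = 2 * k - 2 ∨ n = 2 * k - 1 ∨ n = 2 * k := by omega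
    rcases hcases with h | h | h | h
    · -- n = 2k - 3, need k ≥ 4
      subst h
      have hk4 : 4 ≤ k := by omega
      have hm3 : 3 ≤ m := by
        by_contra hc
        push_neg at hc
        have hm2' : m ≤ 2 := by omega
        nlinarith [mul_le_mul_of_nonneg_left hm2' (show (0:ℤ) ≤ k - 2 by omega)]
      have hk7 : k < 7 := by
        nlinarith [mul_le_mul_of_nonneg_left hm3 (show (0:ℤ) ≤ k - 3 by omega)]
      interval_cases k <;> omega
    · -- n = 2k - 2, need k ≥ 3
      subst h
      have hk3 : 3 ≤ k := by omega
      have hm3 : 3 ≤ m := by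
        by_contra hc
        push_neg at hc
        have hm2' : m ≤ 2 := by omega
        nlinarith [mul_le_mul_of_nonneg_left hm2' (show (0:ℤ) ≤ k - 1 by omega)]
      have hk5 : k < 5 := by
        nlinarith [mul_le_mul_of_nonneg_left hm3 (show (0:ℤ) ≤ k - 2 by omega)]
      interval_cases k <;> omega
    · -- n = 2k - 1
      subst h
      have hm3 : 3 ≤ m := by
        by_contra hc
        push_neg at hc
        have hm2' : m ≤ 2 := by omega
        nlinarith [mul_le_mul_of_nonneg_left hm2' (show (0:ℤ) ≤ k by omega)]
      have hk3 : k < 3 := by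
        nlinarith [mul_le_mul_of_nonneg_left hm3 (show (0:ℤ) ≤ k - 1 by omega)]
      interval_cases k <;> omega
    · -- n = 2k
      subst h
      have hm3 : m < 3 := by
        by_contra hc
        push_neg at hc
        nlinarith [mul_le_mul_of_nonneg_left hc (show (0:ℤ) ≤ k by omega)]
      have hm : m = 2 := by omega
      exact Or.inl ⟨rfl, hm⟩
end

section
/- Let n, k, m be positive integers with n ≥ 3, n ≥ 2k - 3, n > k, and suppose τ = n/m satisfies n - k < τ < n - k + 1 with m ≥ 2. Then n ≤ 2k - 1, and the solutions (n, k, m) are exactly: (2k-1, k, 2) for k ≥ 2; (4, 3, 3); (5, 4, 4); (5, 4, 3); (7, 5, 3). -/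
theorem stmt_6 (n k m : ℤ) (hn0 : 0 < n) (hk0 : 0 < k) (hm0 : 0 < m)
    (hn : 3 ≤ n) (htech : 2 * k - 3 ≤ n) (hnk : k < n)
    (τ : ℚ) (hτ : τ = (n : ℚ) / m) (hm2 : 2 ≤ m)
    (h1 : (n : ℚ) - k < τ) (h2 : τ < (n : ℚ) - k + 1) :
    n ≤ 2 * k - 1 ∧
      ((n = 2 * k - 1 ∧ m = 2 ∧ 2 ≤ k) ∨
       (n = 4 ∧ k = 3 ∧ m = 3) ∨
       (n = 5 ∧ k = 4 ∧ m = 4) ∨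
       (n = 5 ∧ k = 4 ∧ m = 3) ∨
       (n = 7 ∧ k = 5 ∧ m = 3)) := by
  subst hτ
  have hmQ : (0 : ℚ) < (m : ℚ) := by exact_mod_cast hm0
  have hA : m * (n - k) < n := by
    have h1' := (lt_div_iff₀ hmQ).mp h1
    have hAQ : ((m : ℚ)) * ((n : ℚ) - k) < n := by linarith [mul_comm ((n:ℚ)-k) (m:ℚ)] 
    exact_mod_cast hAQ
  have hB : n < m * (n - k) + m := by
    have h2' := (div_lt_iff₀ hmQ).mp h2
    have hBQ : (n : ℚ) < (m : ℚ) * ((n : ℚ) - k) + m := by nlinarith [h2']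
    exact_mod_cast hBQ
  have hd1 : 1 ≤ n - k := by omega
  have h2d : 2 * (n - k) ≤ m * (n - k) := by nlinarith
  have hle : n ≤ 2 * k - 1 := by omega
  rcases eq_or_lt_of_le hm2 with hm | hm3
  · subst hm; omega
  · have h3d : 3 * (n - k) ≤ m * (n - k) := by nlinarith
    have hd : n - k = 1 ∨ n - k = 2 := by omega
    rcases hd with hd | hd <;> rw [hd] at hA hB <;> omega
end
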